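/- Let u be a utility function on a finite set M of goods, b > 0, and p, q ∈ F^u with q ≤ p componentwise. Then for any y ∈ G^u(q,b) and any x ∈ D^u(p,b), u(y) ≥ (1/2)·u(x). -/

import Mathlib

open scoped BigOperators

noncomputable section

/-- Scalar product `⟨p, x⟩ = ∑ j p_j x_j`. -/
def dot {M : Type*} [Fintype M] (p x : M → ℝ) : ℝ := ∑ j, p j * x j

/-- A utility function on bundles of goods indexed by `M`. -/
structure IsUtility {M : Type*} [Fintype M] (u : (M → ℝ) → ℝ) : Prop where
  concave : ConcaveOn ℝ {x : M → ℝ | 0 ≤ x} u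
  mono : ∀ ⦃x x' : M → ℝ⦄, 0 ≤ x → x ≤ x' → u x ≤ u x'
  zero : u 0 = 0
  exists_pos : ∃ x : M → ℝ, 0 ≤ x ∧ 0 < u x

/-- The demand correspondence `D^u(p,b)`. -/
def Demand {M : Type*} [Fintype M] (u : (M → ℝ) → ℝ) (p : M → ℝ) (b : ℝ) :
    Set (M → ℝ) :=
  {x | 0 ≤ x ∧ dot p x ≤ b ∧ ∀ z : M → ℝ, 0 ≤ z → dot p z ≤ b → u z ≤ u x}

/-- The Gale demand correspondence `G^u(q,b)`. -/
def GaleDemand {M : Type*} [Fintype M] (u : (M → ℝ) → ℝ) (q : M → ℝ) (b : ℝ) :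
    Set (M → ℝ) :=
  {y | 0 ≤ y ∧ 0 < u y ∧ ∀ z : M → ℝ, 0 ≤ z → 0 < u z →
    b * Real.log (u z) - dot q z ≤ b * Real.log (u y) - dot q y}

/-- `F^u`: prices at which the Gale objective is bounded above for some budget. -/
def FsetU {M : Type*} [Fintype M] (u : (M → ℝ) → ℝ) : Set (M → ℝ) :=
  {q | 0 ≤ q ∧ ∃ b : ℝ, 0 < b ∧
    BddAbove ((fun y => b * Real.log (u y) - dot q y) ''
      {y : M → ℝ | 0 ≤ y ∧ 0 < u y})}

lemma dot_smul_add {M : Type*} [Fintype M] (q x y : M → ℝ) (s t : ℝ) :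
    dot q (s • x + t • y) = s * dot q x + t * dot q y := by
  simp only [dot, Pi.add_apply, Pi.smul_apply, smul_eq_mul, Finset.mul_sum]
  rw [← Finset.sum_add_distrib]
  exact Finset.sum_congr rfl fun j _ => by ring

/-- The Gale demand at lower prices `q ≤ p` yields at least half the utility of a
utility maximizing bundle at prices `p`. -/
theorem gale_demand_half_approx {M : Type*} [Fintype M]
    (u : (M → ℝ) → ℝ) (hu : IsUtility u) (b : ℝ) (hb : 0 < b)
    (p q : M → ℝ) (hp : p ∈ FsetU u) (hq : q ∈ FsetU u) (hqp : q ≤ p)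
    (y : M → ℝ) (hy : y ∈ GaleDemand u q b)
    (x : M → ℝ) (hx : x ∈ Demand u p b) :
    u x ≤ 2 * u y := by
  obtain ⟨hx0, hxb, hxmax⟩ := hx
  obtain ⟨hy0, huy, hygale⟩ := hy
  have hq0 : (0 : M → ℝ) ≤ q := hq.1
  -- u x ≥ 0
  have hux0 : 0 ≤ u x := by
    have := hxmax 0 le_rfl (by simp [dot]; positivity)
    rw [hu.zero] at this; linarith
  -- dot q x ≤ b
  have hqx : dot q x ≤ b := by
    refine le_trans ?_ hxb
    exact Finset.sum_le_sum fun j _ => mul_le_mul_of_nonneg_right (hqp j) (hx0 j)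
  -- dot q y ≥ 0
  have hqy : 0 ≤ dot q y := Finset.sum_nonneg fun j _ => mul_nonneg (hq0 j) (hy0 j)
  -- key inequality for each t ∈ (0, 1/2]
  have key : ∀ t : ℝ, 0 < t → t ≤ 1 / 2 → (1 - t) * u x ≤ (2 - t) * u y := by
    intro t ht ht2
    have ht1 : t < 1 := by linarith
    set z : M → ℝ := t • x + (1 - t) • y with hz
    have hz0 : (0 : M → ℝ) ≤ z := by
      intro j
      simp only [hz, Pi.add_apply, Pi.smul_apply, smul_eq_mul, Pi.zero_apply]
      have h1 : 0 ≤ x j := hx0 j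
      have h2 : 0 ≤ y j := hy0 j
      nlinarith
    have hconc : t * u x + (1 - t) * u y ≤ u z :=
      hu.concave.2 hx0 hy0 ht.le (by linarith) (by ring)
    have huz : 0 < u z := by nlinarith
    have hgale := hygale z hz0 huz
    have hdotz : dot q z = t * dot q x + (1 - t) * dot q y := dot_smul_add q x y t (1 - t)
    -- b * (log u z - log u y) ≤ t * b
    have hlog : Real.log (u z) ≤ Real.log (u y) + t := by
      have h1 : b * Real.log (u z) - b * Real.log (u y) ≤ dot q z - dot q y := by linarith
      have h2 : dot q z - dot q y = t * (dot q x - dot q y) := by rw [hdotz]; ring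
      have h3 : t * (dot q x - dot q y) ≤ t * b := by nlinarith
      have : b * (Real.log (u z) - Real.log (u y)) ≤ b * t := by nlinarith
      have := (mul_le_mul_iff_right₀ hb).mp this
      linarith
    have huzle : u z ≤ u y * Real.exp t := by
      calc u z = Real.exp (Real.log (u z)) := (Real.exp_log huz).symm
        _ ≤ Real.exp (Real.log (u y) + t) := Real.exp_le_exp.mpr hlog
        _ = u y * Real.exp t := by rw [Real.exp_add, Real.exp_log huy]
    have hexp : Real.exp t ≤ 1 / (1 - t) :=
      Real.exp_bound_div_one_sub_of_interval ht.le ht1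
    have h1t : 0 < 1 - t := by linarith
    have hzley : u z ≤ u y / (1 - t) := by
      calc u z ≤ u y * Real.exp t := huzle
        _ ≤ u y * (1 / (1 - t)) := mul_le_mul_of_nonneg_left hexp huy.le
        _ = u y / (1 - t) := by ring
    -- (1-t)(t u x + (1-t) u y) ≤ u y
    have hmul : (1 - t) * (t * u x + (1 - t) * u y) ≤ u y := by
      have := mul_le_mul_of_nonneg_left hzley h1t.le
      rw [mul_div_cancel₀ _ h1t.ne'] at this
      nlinarith
    -- t (1-t) u x ≤ t (2-t) u y, divide by t
    have : t * ((1 - t) * u x) ≤ t * ((2 - t) * u y) := by nlinarith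
    exact (mul_le_mul_iff_right₀ ht).mp this
  -- conclude by contradiction, taking t small
  by_contra h
  push_neg at h
  have hA : 0 < u x - 2 * u y := by linarith
  have hB : 0 < u x - u y := by linarith
  set t : ℝ := min (1 / 2) ((u x - 2 * u y) / (2 * (u x - u y))) with htdef
  have ht : 0 < t := lt_min (by norm_num) (by positivity)
  have ht2 : t ≤ 1 / 2 := min_le_left _ _
  have hk := key t ht ht2
  have htB : t * (u x - u y) ≤ (u x - 2 * u y) / 2 := by
    have h1 : t ≤ (u x - 2 * u y) / (2 * (u x - u y)) := min_le_right _ _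
    have h2 := mul_le_mul_of_nonneg_right h1 hB.le
    have heq : (u x - 2 * u y) / (2 * (u x - u y)) * (u x - u y)
        = (u x - 2 * u y) / 2 := by
      field_simp
    linarith
  nlinarith
  end
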